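/- Let ζ₁,…,ζₙ be i.i.d. real random variables, S_i the random walk, σ = max{i ≤ n : S_i ≤ 0}, and let B be a Borel set with P(S_n ∈ B) > 0. Then conditionally on {S_n ∈ B}, the time-reversed process Ŝ_i = S_σ − S_{σ−i}, 0 ≤ i ≤ σ, has the same law as (S_i)_{0 ≤ i ≤ σ}. -/

import Mathlib

/-!
On the event {σ = k}, reversing the first k increments, (ζ₁, …, ζ_k) ↦ (ζ_k, …, ζ₁), turns the
partial sums S_i (i ≤ k) into S_k − S_{k−i} and leaves those with i ≥ k unchanged. Hence it maps
the stopped walk to the time-reversed one while preserving both σ and S_n. For i.i.d. increments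
the reversal preserves the joint law, so the two processes have the same law on each
{σ = k, S_n ∈ B}; summing over k gives the claim.
-/

open MeasureTheory ProbabilityTheory Finset

theorem Nat.sSup_setOf_le_and_eq_findGreatest (P : ℕ → Prop) [DecidablePred P] (n : ℕ) :
    sSup {i | i ≤ n ∧ P i} = Nat.findGreatest P n := by
  by_cases h : ∃ i ≤ n, P i
  · obtain ⟨i, hin, hi⟩ := h
    refine IsGreatest.csSup_eq ⟨⟨Nat.findGreatest_le n, Nat.findGreatest_spec hin hi⟩, ?_⟩
    exact fun j ⟨hjn, hj⟩ => Nat.le_findGreatest hjn hj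
  · push Not at h
    have hempty : {i | i ≤ n ∧ P i} = ∅ :=
      Set.eq_empty_of_forall_notMem fun i hi => h i hi.1 hi.2
    rw [hempty, csSup_empty, Nat.bot_eq_zero, eq_comm, Nat.findGreatest_eq_zero_iff]
    exact fun i _ hin => h i hin

theorem ProbabilityTheory.iIndepFun.map_comp_eq_of_injective {Ω ι β : Type*}
    [MeasurableSpace Ω] [MeasurableSpace β] {μ : Measure Ω} [IsProbabilityMeasure μ]
    {X : ι → Ω → β} (hX : ∀ i, Measurable (X i)) (hindep : iIndepFun X μ)
    (hident : ∀ i j, μ.map (X i) = μ.map (X j)) {π : ι → ι} (hπ : π.Injective) :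
    (μ.map fun ω i => X i ω).map (fun x => x ∘ π) = μ.map fun ω i => X i ω := by
  have : ∀ i, IsProbabilityMeasure (μ.map (X i)) :=
    fun i => Measure.isProbabilityMeasure_map (hX i).aemeasurable
  rw [Measure.map_map (by fun_prop) (measurable_pi_lambda _ hX)]
  change μ.map (fun ω i => X (π i) ω) = _
  rw [(hindep.precomp hπ).map_fun_eq_infinitePi_map (fun i => hX (π i)),
    hindep.map_fun_eq_infinitePi_map hX]
  congr 1
  exact funext fun i => hident (π i) i

theorem ProbabilityTheory.map_cond_preimage {Ω α : Type*}
    [MeasurableSpace Ω] [MeasurableSpace α] {μ : Measure Ω} {f : Ω → α} (hf : Measurable f)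
    {s : Set α} (hs : MeasurableSet s) :
    (μ[|f ⁻¹' s]).map f = (μ.map f)[|s] := by
  rw [ProbabilityTheory.cond, ProbabilityTheory.cond, Measure.map_smul,
    ← Measure.restrict_map hf hs, Measure.map_apply hf hs]

namespace RandomWalk

noncomputable def partialSum (x : ℕ → ℝ) (i : ℕ) : ℝ := ∑ j ∈ range i, x j

noncomputable def lastNonposTime (n : ℕ) (x : ℕ → ℝ) : ℕ :=
  Nat.findGreatest (fun i => partialSum x i ≤ 0) n

def prefixRev (k j : ℕ) : ℕ := if j < k then k - 1 - j else j

lemma prefixRev_involutive (k : ℕ) : Function.Involutive (prefixRev k) := by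
  intro j
  unfold prefixRev
  split_ifs <;> omega

@[simp] lemma partialSum_zero (x : ℕ → ℝ) : partialSum x 0 = 0 := by
  simp [partialSum]

lemma partialSum_succ (x : ℕ → ℝ) (i : ℕ) : partialSum x (i + 1) = partialSum x i + x i :=
  sum_range_succ x i

lemma partialSum_comp_prefixRev_of_le {k i : ℕ} (hi : i ≤ k) (x : ℕ → ℝ) :
    partialSum (x ∘ prefixRev k) i = partialSum x k - partialSum x (k - i) := by
  induction i with
  | zero => simp
  | succ i ih =>
    have hk : k - i = (k - (i + 1)) + 1 := by omega
    rw [partialSum_succ, ih (by omega), hk, partialSum_succ, Function.comp_apply, prefixRev,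
      if_pos (by omega), show k - 1 - i = k - (i + 1) by omega]
    ring

lemma partialSum_comp_prefixRev_of_ge {k i : ℕ} (hi : k ≤ i) (x : ℕ → ℝ) :
    partialSum (x ∘ prefixRev k) i = partialSum x i := by
  induction i, hi using Nat.le_induction with
  | base => simp [partialSum_comp_prefixRev_of_le le_rfl]
  | succ i hki ih =>
    rw [partialSum_succ, partialSum_succ, ih, Function.comp_apply, prefixRev, if_neg (by omega)]

lemma lastNonposTime_comp_prefixRev {n k : ℕ} {x : ℕ → ℝ} (h : lastNonposTime n x = k) :
    lastNonposTime n (x ∘ prefixRev k) = k := by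
  unfold lastNonposTime at h ⊢
  rw [Nat.findGreatest_eq_iff] at h ⊢
  obtain ⟨hkn, hk, hgt⟩ := h
  refine ⟨hkn, ?_, fun i hki hin => ?_⟩
  · simpa [partialSum_comp_prefixRev_of_le le_rfl] using hk
  · simpa [partialSum_comp_prefixRev_of_ge hki.le] using hgt hki hin

noncomputable def stoppedPath (n : ℕ) (x : ℕ → ℝ) : ℕ × (ℕ → ℝ) :=
  (lastNonposTime n x, fun i => partialSum x (min i (lastNonposTime n x)))

noncomputable def reversedStoppedPath (n : ℕ) (x : ℕ → ℝ) : ℕ × (ℕ → ℝ) :=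
  (lastNonposTime n x, fun i => partialSum x (lastNonposTime n x) -
    partialSum x (lastNonposTime n x - min i (lastNonposTime n x)))

lemma stoppedPath_comp_prefixRev {n k : ℕ} {x : ℕ → ℝ} (h : lastNonposTime n x = k) :
    stoppedPath n (x ∘ prefixRev k) = reversedStoppedPath n x := by
  simp only [stoppedPath, reversedStoppedPath, lastNonposTime_comp_prefixRev h, h,
    partialSum_comp_prefixRev_of_le (min_le_right _ k)]

lemma measurable_partialSum (i : ℕ) : Measurable fun x : ℕ → ℝ => partialSum x i := by
  unfold partialSum
  fun_prop

lemma measurable_partialSum_comp {g : (ℕ → ℝ) → ℕ} (hg : Measurable g) :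
    Measurable fun x => partialSum x (g x) :=
  (measurable_from_prod_countable_left (f := fun p : (ℕ → ℝ) × ℕ => partialSum p.1 p.2)
    measurable_partialSum).comp (measurable_id.prodMk hg)

lemma measurable_lastNonposTime (n : ℕ) : Measurable (lastNonposTime n) :=
  measurable_findGreatest fun k _ => measurableSet_le (measurable_partialSum k) measurable_const

lemma measurable_stoppedPath (n : ℕ) : Measurable (stoppedPath n) :=
  (measurable_lastNonposTime n).prodMk <| measurable_pi_lambda _ fun i =>
    measurable_partialSum_comp
      ((measurable_from_nat (f := fun c => min i c)).comp (measurable_lastNonposTime n))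

lemma measurable_reversedStoppedPath (n : ℕ) : Measurable (reversedStoppedPath n) :=
  (measurable_lastNonposTime n).prodMk <| measurable_pi_lambda _ fun i =>
    (measurable_partialSum_comp (measurable_lastNonposTime n)).sub
      (measurable_partialSum_comp
        ((measurable_from_nat (f := fun c => c - min i c)).comp (measurable_lastNonposTime n)))

def lastNonposTimeSlice (n : ℕ) (B : Set ℝ) (k : ℕ) : Set (ℕ → ℝ) :=
  {x | lastNonposTime n x = k ∧ partialSum x n ∈ B}

lemma measurable_comp_prefixRev (k : ℕ) : Measurable fun x : ℕ → ℝ => x ∘ prefixRev k :=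
  measurable_pi_lambda _ fun _ => measurable_pi_apply _

lemma comp_prefixRev_mem {n k : ℕ} {B : Set ℝ} {x : ℕ → ℝ}
    (hx : x ∈ lastNonposTimeSlice n B k) : x ∘ prefixRev k ∈ lastNonposTimeSlice n B k := by
  obtain ⟨hk, hB⟩ := hx
  refine ⟨lastNonposTime_comp_prefixRev hk, ?_⟩
  rwa [partialSum_comp_prefixRev_of_ge (hk ▸ Nat.findGreatest_le n)]

lemma preimage_comp_prefixRev (n k : ℕ) (B : Set ℝ) :
    (fun x => x ∘ prefixRev k) ⁻¹' lastNonposTimeSlice n B k = lastNonposTimeSlice n B k := by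
  refine Set.Subset.antisymm (fun x hx => ?_) fun x => comp_prefixRev_mem
  have := comp_prefixRev_mem hx
  rwa [Function.comp_assoc, (prefixRev_involutive k).comp_self, Function.comp_id] at this

lemma measurableSet_lastNonposTimeSlice {n : ℕ} {B : Set ℝ} (hB : MeasurableSet B) (k : ℕ) :
    MeasurableSet (lastNonposTimeSlice n B k) :=
  (measurableSet_eq_fun (measurable_lastNonposTime n) measurable_const).inter
    (measurable_partialSum n hB)

variable {ν : Measure (ℕ → ℝ)}

lemma map_reversedStoppedPath_restrict_eq {n k : ℕ} {B : Set ℝ} (hB : MeasurableSet B)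
    (hν : ν.map (fun x => x ∘ prefixRev k) = ν) :
    (ν.restrict (lastNonposTimeSlice n B k)).map (reversedStoppedPath n) =
      (ν.restrict (lastNonposTimeSlice n B k)).map (stoppedPath n) := by
  set A := lastNonposTimeSlice n B k
  have hA : MeasurableSet A := measurableSet_lastNonposTimeSlice hB k
  calc (ν.restrict A).map (reversedStoppedPath n)
      = (ν.restrict A).map (stoppedPath n ∘ fun x => x ∘ prefixRev k) :=
        Measure.map_congr <| (ae_restrict_iff' hA).2 <| ae_of_all _ fun x hx =>
          (stoppedPath_comp_prefixRev hx.1).symm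
    _ = ((ν.map fun x => x ∘ prefixRev k).restrict A).map (stoppedPath n) := by
        rw [← Measure.map_map (measurable_stoppedPath n) (measurable_comp_prefixRev k),
          Measure.restrict_map (measurable_comp_prefixRev k) hA, preimage_comp_prefixRev]
    _ = (ν.restrict A).map (stoppedPath n) := by rw [hν]

theorem map_reversedStoppedPath_restrict {n : ℕ} {B : Set ℝ} (hB : MeasurableSet B)
    (hν : ∀ k, ν.map (fun x => x ∘ prefixRev k) = ν) :
    (ν.restrict {x | partialSum x n ∈ B}).map (reversedStoppedPath n) =
      (ν.restrict {x | partialSum x n ∈ B}).map (stoppedPath n) := by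
  have hunion : {x | partialSum x n ∈ B} = ⋃ k, lastNonposTimeSlice n B k := by
    ext x; simp [lastNonposTimeSlice]
  have hdisj : Pairwise (Function.onFun Disjoint (lastNonposTimeSlice n B)) :=
    fun k l hkl => Set.disjoint_left.2 fun x hk hl => hkl (hk.1.symm.trans hl.1)
  rw [hunion, Measure.restrict_iUnion hdisj (measurableSet_lastNonposTimeSlice hB),
    Measure.map_sum (measurable_reversedStoppedPath n).aemeasurable,
    Measure.map_sum (measurable_stoppedPath n).aemeasurable]
  exact congrArg Measure.sum (funext fun k => map_reversedStoppedPath_restrict_eq hB (hν k))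

theorem map_reversedStoppedPath_cond {n : ℕ} {B : Set ℝ} (hB : MeasurableSet B)
    (hν : ∀ k, ν.map (fun x => x ∘ prefixRev k) = ν) :
    (ν[|{x | partialSum x n ∈ B}]).map (reversedStoppedPath n) =
      (ν[|{x | partialSum x n ∈ B}]).map (stoppedPath n) := by
  rw [ProbabilityTheory.cond, Measure.map_smul, Measure.map_smul,
    map_reversedStoppedPath_restrict hB hν]

end RandomWalk

open RandomWalk in
theorem stmt_12_general {Ω : Type*} [MeasurableSpace Ω] (μ : Measure Ω) [IsProbabilityMeasure μ]
    (n : ℕ) (ζ : ℕ → Ω → ℝ)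
    (hmeas : ∀ i, Measurable (ζ i))
    (hindep : ProbabilityTheory.iIndepFun ζ μ)
    (hident : ∀ i, μ.map (ζ i) = μ.map (ζ 0))
    (S : ℕ → Ω → ℝ) (hS : ∀ i ω, S i ω = ∑ j ∈ Finset.range i, ζ j ω)
    (σ : Ω → ℕ) (hσ : ∀ ω, σ ω = sSup {i | i ≤ n ∧ S i ω ≤ 0})
    (B : Set ℝ) (hB : MeasurableSet B) :
    (μ[|{ω | S n ω ∈ B}]).map
        (fun ω => ((σ ω, fun i : ℕ => S (σ ω) ω - S (σ ω - min i (σ ω)) ω) : ℕ × (ℕ → ℝ)))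
      = (μ[|{ω | S n ω ∈ B}]).map
        (fun ω => ((σ ω, fun i : ℕ => S (min i (σ ω)) ω) : ℕ × (ℕ → ℝ))) := by
  set Z : Ω → ℕ → ℝ := fun ω j => ζ j ω
  have hZ : Measurable Z := measurable_pi_lambda _ hmeas
  have hSZ : ∀ i ω, S i ω = partialSum (Z ω) i := hS
  have hσZ : ∀ ω, σ ω = lastNonposTime n (Z ω) := fun ω => by
    rw [hσ, Nat.sSup_setOf_le_and_eq_findGreatest, lastNonposTime]
    simp only [hSZ]
  have hrev : (fun ω => ((σ ω, fun i : ℕ => S (σ ω) ω - S (σ ω - min i (σ ω)) ω) :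
      ℕ × (ℕ → ℝ))) = reversedStoppedPath n ∘ Z := by
    funext ω; simp only [hσZ, hSZ, reversedStoppedPath, Function.comp_apply]
  have hfwd : (fun ω => ((σ ω, fun i : ℕ => S (min i (σ ω)) ω) : ℕ × (ℕ → ℝ))) =
      stoppedPath n ∘ Z := by
    funext ω; simp only [hσZ, hSZ, stoppedPath, Function.comp_apply]
  have hevent : {ω | S n ω ∈ B} = Z ⁻¹' {x | partialSum x n ∈ B} := by
    simp only [hSZ]; rfl
  have hexch : ∀ k, (μ.map Z).map (fun x => x ∘ prefixRev k) = μ.map Z := fun k =>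
    hindep.map_comp_eq_of_injective hmeas (fun i j => (hident i).trans (hident j).symm)
      (prefixRev_involutive k).injective
  rw [hrev, hfwd, hevent, ← Measure.map_map (measurable_reversedStoppedPath n) hZ,
    ← Measure.map_map (measurable_stoppedPath n) hZ,
    map_cond_preimage hZ (s := {x | partialSum x n ∈ B}) (measurable_partialSum n hB)]
  exact map_reversedStoppedPath_cond hB hexch

/-- Conditionally on {S_n ∈ B}, the time-reversed stopped walk Ŝ has the same law
as the stopped walk S (paths encoded together with σ, frozen after σ). -/
theorem stmt_12 {Ω : Type*} [MeasurableSpace Ω] (μ : Measure Ω) [IsProbabilityMeasure μ]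
    (n : ℕ) (ζ : ℕ → Ω → ℝ)
    (hmeas : ∀ i, Measurable (ζ i))
    (hindep : ProbabilityTheory.iIndepFun ζ μ)
    (hident : ∀ i, μ.map (ζ i) = μ.map (ζ 0))
    (S : ℕ → Ω → ℝ) (hS : ∀ i ω, S i ω = ∑ j ∈ Finset.range i, ζ j ω)
    (σ : Ω → ℕ) (hσ : ∀ ω, σ ω = sSup {i | i ≤ n ∧ S i ω ≤ 0})
    (B : Set ℝ) (hB : MeasurableSet B) (hpos : 0 < μ {ω | S n ω ∈ B}) :
    (μ[|{ω | S n ω ∈ B}]).map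
        (fun ω => ((σ ω, fun i : ℕ => S (σ ω) ω - S (σ ω - min i (σ ω)) ω) : ℕ × (ℕ → ℝ)))
      = (μ[|{ω | S n ω ∈ B}]).map
        (fun ω => ((σ ω, fun i : ℕ => S (min i (σ ω)) ω) : ℕ × (ℕ → ℝ))) :=
  stmt_12_general μ n ζ hmeas hindep hident S hS σ hσ B hB
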